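/- Fix an integer t ≥ 1. For all integers i, j ≥ 1 with π_i ≠ π_j, LCS(π_i, π_j) ≤ t⁴. -/

import Mathlib

/-- Lexicographic "strictly smaller" for vectors in `Fin r → ℤ`. -/
def lexLt {r : ℕ} (x y : Fin r → ℤ) : Prop :=
  ∃ j : Fin r, (∀ i : Fin r, i < j → x i = y i) ∧ x j < y j

/-- The `u`-twisted order on the alphabet `[t]^r`: `a` weakly precedes `b` in `π(u)`
iff `a = b` or `(u₁a₁, …, u_r a_r)` is lexicographically smaller than
`(u₁b₁, …, u_r b_r)` (letters of `[t] = {1,…,t}` are represented by `Fin t`,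
with `a i : Fin t` standing for the letter `(a i : ℤ) + 1`). -/
def uLe {t r : ℕ} (u : Fin r → ℤ) (a b : Fin r → Fin t) : Prop :=
  a = b ∨ lexLt (fun i => u i * ((a i : ℤ) + 1)) (fun i => u i * ((b i : ℤ) + 1))

instance {t r : ℕ} (u : Fin r → ℤ) : DecidableRel (uLe (t := t) (r := r) u) := fun a b => by
  unfold uLe lexLt; infer_instance

/-- `piWord t r u = π(u)`: the word listing every element of the alphabet `[t]^r`
exactly once, in increasing `u`-twisted lexicographic order. -/
noncomputable def piWord (t r : ℕ) (u : Fin r → ℤ) : List (Fin r → Fin t) :=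
  (Finset.univ.toList (α := Fin r → Fin t)).mergeSort (fun a b => decide (uLe u a b))

/-- `LCS ws` is the length of a longest word that is a subsequence of every word in `ws`. -/
noncomputable def LCS {α : Type*} (ws : List (List α)) : ℕ :=
  sSup {L | ∃ x : List α, (∀ w ∈ ws, x.Sublist w) ∧ x.length = L}

/-- The eight sign vectors `u^{(1)}, …, u^{(8)}` (rows), with `+` as `1` and `-` as `-1`. -/
def uMat : Fin 8 → Fin 8 → ℤ :=
  ![![1, 1, 1, 1, 1, 1, 1, 1],
    ![-1, -1, -1, 1, -1, 1, -1, -1],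
    ![1, 1, 1, -1, -1, -1, -1, 1],
    ![-1, 1, -1, -1, 1, 1, 1, -1],
    ![1, -1, -1, 1, -1, -1, 1, 1],
    ![-1, 1, 1, 1, 1, -1, -1, -1],
    ![1, -1, -1, -1, 1, 1, -1, 1],
    ![-1, -1, 1, -1, -1, -1, 1, -1]]

/-- `uSeq i = u^{(i)}` for `i ≥ 1`: the periodic extension `u^{(i)} = u^{(i mod 8)}`,
with the representative of `i mod 8` taken in `{1,…,8}`. -/
def uSeq (i : ℕ) : Fin 8 → ℤ := uMat ⟨(i - 1) % 8, Nat.mod_lt _ (by norm_num)⟩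

/-- `piSeq t i = π_i = π(u^{(i)})`, a permutation of the alphabet `[t]^8`. -/
noncomputable def piSeq (t : ℕ) (i : ℕ) : List (Fin 8 → Fin t) := piWord t 8 (uSeq i)

section Aux

lemma lexLt_trans {r : ℕ} {x y z : Fin r → ℤ} (h1 : lexLt x y) (h2 : lexLt y z) :
    lexLt x z := by
  obtain ⟨j1, e1, s1⟩ := h1
  obtain ⟨j2, e2, s2⟩ := h2
  rcases lt_trichotomy j1 j2 with h | h | h
  · exact ⟨j1, fun i hi => (e1 i hi).trans (e2 i (hi.trans h)),
      by rw [← e2 j1 h]; exact s1⟩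
  · subst h
    exact ⟨j1, fun i hi => (e1 i hi).trans (e2 i hi), s1.trans s2⟩
  · exact ⟨j2, fun i hi => (e1 i (hi.trans h)).trans (e2 i hi),
      by rw [e1 j2 h]; exact s2⟩

lemma lexLt_total {r : ℕ} {x y : Fin r → ℤ} (h : x ≠ y) : lexLt x y ∨ lexLt y x := by
  have hne : ∃ k, x k ≠ y k := by
    by_contra hc
    push_neg at hc
    exact h (funext hc)
  set S : Finset (Fin r) := Finset.univ.filter (fun k => x k ≠ y k) with hS
  have hSne : S.Nonempty := by
    obtain ⟨k, hk⟩ := hne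
    exact ⟨k, by simp [hS, hk]⟩
  set k := S.min' hSne with hk
  have hkS : k ∈ S := S.min'_mem hSne
  have hkx : x k ≠ y k := by simpa [hS] using hkS
  have hmin : ∀ i, i < k → x i = y i := by
    intro i hi
    by_contra hc
    have : k ≤ i := S.min'_le i (by simp [hS, hc])
    omega
  rcases lt_or_gt_of_ne hkx with h' | h'
  · exact Or.inl ⟨k, hmin, h'⟩
  · exact Or.inr ⟨k, fun i hi => (hmin i hi).symm, h'⟩

lemma lexLt_irrefl {r : ℕ} {x : Fin r → ℤ} (h : lexLt x x) : False := by
  obtain ⟨j, _, s⟩ := h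
  exact lt_irrefl _ s

lemma uLe_trans {t r : ℕ} (u : Fin r → ℤ) (a b c : Fin r → Fin t)
    (h1 : uLe u a b) (h2 : uLe u b c) : uLe u a c := by
  rcases h1 with rfl | h1
  · exact h2
  rcases h2 with rfl | h2
  · exact Or.inr h1
  · exact Or.inr (lexLt_trans h1 h2)

lemma uLe_total {t r : ℕ} (u : Fin r → ℤ) (hu : ∀ k, u k ≠ 0) (a b : Fin r → Fin t) :
    uLe u a b ∨ uLe u b a := by
  by_cases hab : a = b
  · exact Or.inl (Or.inl hab)
  have hne : (fun i => u i * ((a i : ℤ) + 1)) ≠ (fun i => u i * ((b i : ℤ) + 1)) := by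
    intro hc
    apply hab
    funext k
    have := congrFun hc k
    have h2 : (a k : ℤ) = (b k : ℤ) := by
      have := mul_left_cancel₀ (hu k) this
      omega
    exact Fin.ext (by exact_mod_cast h2)
  rcases lexLt_total hne with h | h
  · exact Or.inl (Or.inr h)
  · exact Or.inr (Or.inr h)

/-- The key structural lemma: two vectors comparable in both twisted lex orders
must differ at a coordinate where the sign vectors agree. -/
lemma key_lemma {t r : ℕ} {u v : Fin r → ℤ}
    (hu : ∀ k, u k = 1 ∨ u k = -1) (hv : ∀ k, v k = 1 ∨ v k = -1)
    {a b : Fin r → Fin t}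
    (h1 : lexLt (fun i => u i * ((a i : ℤ) + 1)) (fun i => u i * ((b i : ℤ) + 1)))
    (h2 : lexLt (fun i => v i * ((a i : ℤ) + 1)) (fun i => v i * ((b i : ℤ) + 1))) :
    ∃ k, u k = v k ∧ a k ≠ b k := by
  obtain ⟨j1, e1, s1⟩ := h1
  obtain ⟨j2, e2, s2⟩ := h2
  have s1' : u j1 * ((a j1 : ℤ) + 1) < u j1 * ((b j1 : ℤ) + 1) := s1
  have s2' : v j2 * ((a j2 : ℤ) + 1) < v j2 * ((b j2 : ℤ) + 1) := s2
  have hu0 : ∀ k, u k ≠ 0 := fun k => by rcases hu k with h | h <;> simp [h]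
  have hv0 : ∀ k, v k ≠ 0 := fun k => by rcases hv k with h | h <;> simp [h]
  have e1' : ∀ i, i < j1 → a i = b i := by
    intro i hi
    have := e1 i hi
    simp only at this
    have := mul_left_cancel₀ (hu0 i) this
    exact Fin.ext (by omega)
  have e2' : ∀ i, i < j2 → a i = b i := by
    intro i hi
    have := e2 i hi
    simp only at this
    have := mul_left_cancel₀ (hv0 i) this
    exact Fin.ext (by omega)
  have hj : j1 = j2 := by
    rcases lt_trichotomy j1 j2 with h | h | h
    · exact absurd (by rw [e2' j1 h]) (ne_of_lt s1')
    · exact h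
    · exact absurd (by rw [e1' j2 h]) (ne_of_lt s2')
  subst hj
  refine ⟨j1, ?_, ?_⟩
  · by_contra huv
    rcases hu j1 with h1' | h1' <;> rcases hv j1 with h2' | h2' <;>
      rw [h1'] at s1' <;> rw [h2'] at s2' huv <;> omega
  · intro hab
    rw [hab] at s1'
    exact lt_irrefl _ s1'

/-- Common-subsequence length bound for two twisted lex words. -/
lemma chain_bound {t : ℕ} (ht : 1 ≤ t) {u v : Fin 8 → ℤ}
    (hu : ∀ k, u k = 1 ∨ u k = -1) (hv : ∀ k, v k = 1 ∨ v k = -1)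
    (hcard : Fintype.card {k : Fin 8 // u k = v k} ≤ 4)
    {x : List (Fin 8 → Fin t)}
    (hx : x.Sublist (piWord t 8 u)) (hx' : x.Sublist (piWord t 8 v)) :
    x.length ≤ t ^ 4 := by
  have hu0 : ∀ k, u k ≠ 0 := fun k => by rcases hu k with h | h <;> simp [h]
  have hv0 : ∀ k, v k ≠ 0 := fun k => by rcases hv k with h | h <;> simp [h]
  -- piWord is nodup
  have hnodup : (piWord t 8 u).Nodup :=
    ((List.mergeSort_perm _ _).nodup_iff).mpr (Finset.nodup_toList _)
  have hxnd : x.Nodup := hnodup.sublist hx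
  -- sortedness of piWord
  have hsortu : (piWord t 8 u).Pairwise (fun a b => uLe u a b) := by
    have := List.pairwise_mergeSort (le := fun a b => decide (uLe u a b))
      (fun a b c hab hbc => by
        simp only [decide_eq_true_eq] at *
        exact uLe_trans u a b c hab hbc)
      (fun a b => by
        simp only [Bool.or_eq_true, decide_eq_true_eq]
        exact uLe_total u hu0 a b)
      (Finset.univ.toList (α := Fin 8 → Fin t))
    exact this.imp (fun h => by simpa using h)
  have hsortv : (piWord t 8 v).Pairwise (fun a b => uLe v a b) := by
    have := List.pairwise_mergeSort (le := fun a b => decide (uLe v a b))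
      (fun a b c hab hbc => by
        simp only [decide_eq_true_eq] at *
        exact uLe_trans v a b c hab hbc)
      (fun a b => by
        simp only [Bool.or_eq_true, decide_eq_true_eq]
        exact uLe_total v hv0 a b)
      (Finset.univ.toList (α := Fin 8 → Fin t))
    exact this.imp (fun h => by simpa using h)
  have hpu : x.Pairwise (fun a b => uLe u a b) := hsortu.sublist hx
  have hpv : x.Pairwise (fun a b => uLe v a b) := hsortv.sublist hx'
  -- key: map to agreeing coordinates is injective along x
  set f : (Fin 8 → Fin t) → ({k : Fin 8 // u k = v k} → Fin t) :=
    fun a s => a s.1 with hf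
  have hnd : x.Pairwise (· ≠ ·) := hxnd
  have hpair : x.Pairwise (fun a b => f a ≠ f b) := by
    refine ((hpu.and hpv).and hnd).imp ?_
    rintro a b ⟨⟨h1, h2⟩, hab⟩
    rcases h1 with rfl | h1
    · exact absurd rfl hab
    rcases h2 with rfl | h2
    · exact absurd rfl hab
    obtain ⟨k, hk, hkne⟩ := key_lemma hu hv h1 h2
    intro hfe
    exact hkne (congrFun hfe ⟨k, hk⟩)
  have hmapnd : (x.map f).Nodup := List.Pairwise.map f (fun a b h => h) hpair
  calc x.length = (x.map f).length := (List.length_map (as := x) f).symm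
    _ ≤ Fintype.card ({k : Fin 8 // u k = v k} → Fin t) := hmapnd.length_le_card
    _ = t ^ Fintype.card {k : Fin 8 // u k = v k} := by
        rw [Fintype.card_fun, Fintype.card_fin]
    _ ≤ t ^ 4 := Nat.pow_le_pow_right ht hcard

lemma uMat_sign : ∀ p k : Fin 8, uMat p k = 1 ∨ uMat p k = -1 := by decide

lemma uMat_card (p q : Fin 8) (h : uMat p ≠ uMat q) :
    Fintype.card {k : Fin 8 // uMat p k = uMat q k} ≤ 4 := by
  revert h
  revert p q
  decide

end Aux

/-- For `t ≥ 1` and all `i, j ≥ 1` with `π_i ≠ π_j`, `LCS(π_i, π_j) ≤ t⁴`. -/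
theorem stmt14 (t : ℕ) (ht : 1 ≤ t) (i j : ℕ) (hi : 1 ≤ i) (hj : 1 ≤ j)
    (hne : piSeq t i ≠ piSeq t j) :
    LCS [piSeq t i, piSeq t j] ≤ t ^ 4 := by
  have huv : uSeq i ≠ uSeq j := by
    intro h
    exact hne (by unfold piSeq; rw [h])
  apply csSup_le'
  rintro L ⟨x, hsub, rfl⟩
  have hxi : x.Sublist (piSeq t i) := hsub _ (by simp)
  have hxj : x.Sublist (piSeq t j) := hsub _ (by simp)
  exact chain_bound ht (fun k => uMat_sign _ k) (fun k => uMat_sign _ k)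
    (uMat_card _ _ huv) hxi hxj
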